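/- arXiv:1909.07917 — 5 statements merged into one kernel-verified Lean document; each statement's English description precedes it below -/
import Mathlib

section
/- Let l ≤ n be positive integers, let π restrict an n-bit word to its first l bits, fix a correct key k* : Fin l → Bool, and let the SARLock error predicate be flip(i,k) := (π(i) = k and k ≠ k*). Then the number of pairs (i,k) ∈ (Fin n → Bool) × (Fin l → Bool) with flip(i,k) equals (2^l − 1)·2^(n−l); consequently the functional corruptibility E_FC, defined as this count divided by 2^(n+l), equals (2^l − 1)/2^(2l). -/
/-- Each fiber of the restriction map has `2^(n-l)` elements. -/
lemma sarlock_fiber_card (n l : ℕ) (hln : l ≤ n) (k : Fin l → Bool) :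
    (Finset.univ.filter (fun i : Fin n → Bool =>
        (fun j => i (Fin.castLE hln j)) = k)).card = 2 ^ (n - l) := by
  rw [← Fintype.card_subtype]
  have e : {i : Fin n → Bool // (fun j => i (Fin.castLE hln j)) = k} ≃
      (Fin (n - l) → Bool) :=
    { toFun := fun i m => i.1 ⟨l + m.val, by omega⟩
      invFun := fun f =>
        ⟨fun m => if h : m.val < l then k ⟨m.val, h⟩ else f ⟨m.val - l, by omega⟩, by
          funext j
          simp only [Fin.castLE]
          rw [dif_pos j.isLt]⟩
      left_inv := by
        rintro ⟨i, hi⟩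
        ext m
        simp only
        split_ifs with h
        · have := congrFun hi ⟨m.val, h⟩
          rw [← this]
          congr 1
        · congr 1
          ext
          simp
          omega
      right_inv := by
        intro f
        funext m
        simp only
        rw [dif_neg (by omega)]
        congr 1
        ext
        simp }
  rw [Fintype.card_congr e]
  simp

/-- SARLock functional corruptibility: the number of erring pairs `(i, k)` equals
`(2^l - 1) * 2^(n-l)`, and hence `E_FC = (2^l - 1) / 2^(2l)`. -/
theorem sarlock_functional_corruptibility (n l : ℕ) (hl : 0 < l) (hln : l ≤ n)
    (kstar : Fin l → Bool) :
    ((Finset.univ.filter (fun p : (Fin n → Bool) × (Fin l → Bool) =>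
        (fun j => p.1 (Fin.castLE hln j)) = p.2 ∧ p.2 ≠ kstar)).card
      = (2 ^ l - 1) * 2 ^ (n - l)) ∧
    (((Finset.univ.filter (fun p : (Fin n → Bool) × (Fin l → Bool) =>
        (fun j => p.1 (Fin.castLE hln j)) = p.2 ∧ p.2 ≠ kstar)).card : ℚ) / 2 ^ (n + l)
      = (2 ^ l - 1) / 2 ^ (2 * l)) := by
  have hcard : ((Finset.univ.filter (fun p : (Fin n → Bool) × (Fin l → Bool) =>
        (fun j => p.1 (Fin.castLE hln j)) = p.2 ∧ p.2 ≠ kstar)).card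
      = (2 ^ l - 1) * 2 ^ (n - l)) := by
    rw [Finset.card_filter]
    rw [Fintype.sum_prod_type_right]
    have step : ∀ k : Fin l → Bool,
        (∑ i : Fin n → Bool,
          if ((fun j => i (Fin.castLE hln j)) = k ∧ k ≠ kstar) then 1 else 0)
        = if k ≠ kstar then 2 ^ (n - l) else 0 := by
      intro k
      by_cases hk : k ≠ kstar
      · rw [if_pos hk, ← sarlock_fiber_card n l hln k, Finset.card_filter]
        refine Finset.sum_congr rfl fun i _ => ?_
        simp [hk]
      · rw [if_neg hk]
        refine Finset.sum_eq_zero fun i _ => ?_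
        simp [hk]
    rw [Finset.sum_congr rfl fun k _ => step k]
    rw [Finset.sum_ite, Finset.sum_const, Finset.sum_const_zero, add_zero, smul_eq_mul]
    congr 1
    rw [Finset.filter_ne', Finset.card_erase_of_mem (Finset.mem_univ _)]
    simp [Finset.card_univ]
  refine ⟨hcard, ?_⟩
  rw [hcard]
  have h1 : (1 : ℕ) ≤ 2 ^ l := Nat.one_le_two_pow
  rw [div_eq_div_iff (by positivity) (by positivity)]
  push_cast [h1]
  rw [mul_assoc, ← pow_add]
  have : n - l + 2 * l = n + l := by omega
  rw [this]
end

section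
/- Let l ≤ n be positive integers, let π restrict an n-bit word to its first l bits, fix a correct key k* : Fin l → Bool, and let flip(i,k) := (π(i) = k and k ≠ k*). Then the minimum cardinality of a finite set D of n-bit inputs such that for every incorrect key k ≠ k* there exists i ∈ D with flip(i,k) is exactly 2^l − 1. (This is the SAT-attack resilience of SARLock: the minimum number of distinguishing input patterns needed to prune all incorrect keys.) -/
/-- SARLock SAT-attack resilience: the minimum number of DIPs needed to eliminate
all incorrect keys is exactly `2^l - 1`. -/
theorem sarlock_sat_resilience (n l : ℕ) (hl : 0 < l) (hln : l ≤ n)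
    (kstar : Fin l → Bool) :
    IsLeast {c : ℕ | ∃ D : Finset (Fin n → Bool),
        (∀ k : Fin l → Bool, k ≠ kstar →
          ∃ i ∈ D, (fun j => i (Fin.castLE hln j)) = k ∧ k ≠ kstar) ∧ D.card = c}
      (2 ^ l - 1) := by
  constructor
  · -- membership: construct D
    set ext : (Fin l → Bool) → (Fin n → Bool) :=
      fun k j => if h : (j : ℕ) < l then k ⟨j, h⟩ else false with hext
    have hpi : ∀ k : Fin l → Bool, (fun j => ext k (Fin.castLE hln j)) = k := by
      intro k
      funext j
      simp [hext, j.isLt]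
    refine ⟨(Finset.univ.erase kstar).image ext, ?_, ?_⟩
    · intro k hk
      exact ⟨ext k, Finset.mem_image_of_mem _ (Finset.mem_erase.mpr ⟨hk, Finset.mem_univ _⟩),
        hpi k, hk⟩
    · rw [Finset.card_image_of_injective _ ?_]
      · simp [Finset.card_erase_of_mem, Fintype.card_fun]
      · intro a b hab
        rw [← hpi a, ← hpi b, hab]
  · -- lower bound
    rintro c ⟨D, hcov, rfl⟩
    have hsub : Finset.univ.erase kstar ⊆ D.image (fun i => (fun j => i (Fin.castLE hln j))) := by
      intro k hk
      obtain ⟨i, hi, hik, _⟩ := hcov k (Finset.mem_erase.mp hk).1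
      exact Finset.mem_image.mpr ⟨i, hi, hik⟩
    calc 2 ^ l - 1 = (Finset.univ.erase kstar).card := by
          simp [Finset.card_erase_of_mem, Fintype.card_fun]
      _ ≤ (D.image _).card := Finset.card_le_card hsub
      _ ≤ D.card := Finset.card_image_le
end

section
/- Let e : (Fin n → Bool) → (Fin l → Bool) → Prop be an error predicate with correct key k*, and suppose there is a natural number s such that for every input i, the number of incorrect keys k ≠ k* with e i k is at most s. Then every finite set D of inputs such that for every incorrect key k there exists i ∈ D with e i k satisfies s·|D| ≥ 2^l − 1; in particular, the number of SAT-attack iterations is at least (2^l − 1)/s. -/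
/-- If every input eliminates at most `s` incorrect keys, then any set `D` of DIPs
that eliminates all `2^l - 1` incorrect keys satisfies `s * |D| ≥ 2^l - 1`. -/
theorem dip_count_lower_bound (n l : ℕ)
    (e : (Fin n → Bool) → (Fin l → Bool) → Prop) [∀ i k, Decidable (e i k)]
    (kstar : Fin l → Bool) (hstar : ∀ i, ¬ e i kstar) (s : ℕ)
    (hs : ∀ i : Fin n → Bool,
      (Finset.univ.filter (fun k : Fin l → Bool => k ≠ kstar ∧ e i k)).card ≤ s) :
    ∀ D : Finset (Fin n → Bool),
      (∀ k : Fin l → Bool, k ≠ kstar → ∃ i ∈ D, e i k) →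
      2 ^ l - 1 ≤ s * D.card := by
  intro D hD
  have hsub : (Finset.univ.filter (fun k : Fin l → Bool => k ≠ kstar)) ⊆
      D.biUnion (fun i => Finset.univ.filter (fun k : Fin l → Bool => k ≠ kstar ∧ e i k)) := by
    intro k hk
    simp only [Finset.mem_filter, Finset.mem_univ, true_and] at hk
    obtain ⟨i, hi, hei⟩ := hD k hk
    simp only [Finset.mem_biUnion, Finset.mem_filter, Finset.mem_univ, true_and]
    exact ⟨i, hi, hk, hei⟩
  have hcard : (Finset.univ.filter (fun k : Fin l → Bool => k ≠ kstar)).card = 2 ^ l - 1 := by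
    rw [Finset.filter_ne', Finset.card_erase_of_mem (Finset.mem_univ _)]
    simp [Finset.card_univ]
  calc 2 ^ l - 1 = (Finset.univ.filter (fun k : Fin l → Bool => k ≠ kstar)).card := hcard.symm
    _ ≤ (D.biUnion (fun i => Finset.univ.filter (fun k : Fin l → Bool => k ≠ kstar ∧ e i k))).card :=
        Finset.card_le_card hsub
    _ ≤ ∑ i ∈ D, (Finset.univ.filter (fun k : Fin l → Bool => k ≠ kstar ∧ e i k)).card :=
        Finset.card_biUnion_le
    _ ≤ ∑ i ∈ D, s := Finset.sum_le_sum (fun i _ => hs i)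
    _ = s * D.card := by rw [Finset.sum_const, smul_eq_mul, Nat.mul_comm]
end

section
/- Let k, k* : Fin l → Bool with HD(k*,k) = x, where x is even, and let h ≤ l. Then the number of l-bit words i with HD(i,k*) = h and HD(i,k) = h equals C(x, x/2)·C(l−x, h−x/2), where binomial coefficients C(a,b) are taken to be 0 when b < 0 or b > a. -/
/-- Hamming distance between `l`-bit words. -/
def HD {l : ℕ} (a b : Fin l → Bool) : ℕ :=
  (Finset.univ.filter (fun j => a j ≠ b j)).card

open Finset

lemma count_sets {l : ℕ} (D : Finset (Fin l)) (h m : ℕ) (hm : m ≤ h) :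
    ((univ : Finset (Finset (Fin l))).filter
        (fun S => S.card = h ∧ (S ∩ D).card = m)).card
      = D.card.choose m * (l - D.card).choose (h - m) := by
  classical
  rw [← Finset.card_powersetCard m D]
  have hc : Dᶜ.card = l - D.card := by
    rw [Finset.card_compl, Fintype.card_fin]
  rw [← hc, ← Finset.card_powersetCard (h - m) Dᶜ, ← Finset.card_product]
  apply Finset.card_bij' (fun S _ => (S ∩ D, S \ D))
    (fun p _ => p.1 ∪ p.2)
  · intro S hS
    simp only [mem_filter, mem_univ, true_and] at hS
    obtain ⟨h1, h2⟩ := hS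
    simp only [mem_product, mem_powersetCard]
    refine ⟨⟨inter_subset_right, h2⟩, ?_, ?_⟩
    · intro j hj
      simp only [mem_sdiff] at hj
      simp [hj.2]
    · have := Finset.card_inter_add_card_sdiff S D
      omega
  · intro p hp
    simp only [mem_product, mem_powersetCard] at hp
    obtain ⟨⟨hA, hAc⟩, hB, hBc⟩ := hp
    have hdisj : Disjoint p.1 p.2 := by
      apply Finset.disjoint_left.2
      intro a ha hb
      have := hB hb
      simp only [mem_compl] at this
      exact this (hA ha)
    simp only [mem_filter, mem_univ, true_and]
    constructor
    · rw [Finset.card_union_of_disjoint hdisj, hAc, hBc]; omega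
    · have : (p.1 ∪ p.2) ∩ D = p.1 := by
        ext a
        simp only [mem_inter, mem_union]
        constructor
        · rintro ⟨ha | hb, hD⟩
          · exact ha
          · exact absurd hD (by simpa using hB hb)
        · intro ha; exact ⟨Or.inl ha, hA ha⟩
      rw [this, hAc]
  · intro S hS
    ext a
    simp only [mem_union, mem_inter, mem_sdiff]
    tauto
  · intro p hp
    simp only [mem_product, mem_powersetCard] at hp
    obtain ⟨⟨hA, hAc⟩, hB, hBc⟩ := hp
    have h1 : (p.1 ∪ p.2) ∩ D = p.1 := by
      ext a
      simp only [mem_inter, mem_union]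
      constructor
      · rintro ⟨ha | hb, hD⟩
        · exact ha
        · exact absurd hD (by simpa using hB hb)
      · intro ha; exact ⟨Or.inl ha, hA ha⟩
    have h2 : (p.1 ∪ p.2) \ D = p.2 := by
      ext a
      simp only [mem_sdiff, mem_union]
      constructor
      · rintro ⟨ha | hb, hD⟩
        · exact absurd (hA ha) hD
        · exact hb
      · intro hb; exact ⟨Or.inr hb, by simpa using hB hb⟩
    rw [h1, h2]

/-- For `HD(k*,k) = x` even and `h ≤ l`, the intersection of the two Hamming spheres
of radius `h` has size `C(x, x/2) · C(l−x, h−x/2)` (with the convention that the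
binomial coefficient is `0` when its lower index would be negative, handled by the
`if` guard, or exceed its upper index, handled by `Nat.choose`). -/
theorem sphere_intersection_card {l : ℕ} (k kstar : Fin l → Bool) (x h : ℕ)
    (hx : HD kstar k = x) (hev : Even x) (hh : h ≤ l) :
    (Finset.univ.filter (fun i : Fin l → Bool => HD i kstar = h ∧ HD i k = h)).card
      = if x / 2 ≤ h then x.choose (x / 2) * (l - x).choose (h - x / 2) else 0 := by
  classical
  set D : Finset (Fin l) := univ.filter (fun j => kstar j ≠ k j) with hD
  have hDcard : D.card = x := hx
  obtain ⟨t, ht⟩ := hev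
  have key : ∀ i : Fin l → Bool,
      (HD i kstar = h ∧ HD i k = h) ↔
      ((univ.filter (fun j => i j ≠ kstar j)).card = h ∧
       ((univ.filter (fun j => i j ≠ kstar j)) ∩ D).card = x / 2) := by
    intro i
    set S : Finset (Fin l) := univ.filter (fun j => i j ≠ kstar j) with hS
    have h1 : HD i kstar = S.card := rfl
    have h2 : HD i k + 2 * (S ∩ D).card = S.card + x := by
      have heq : (univ.filter (fun j => i j ≠ k j)) = (S \ D) ∪ (D \ S) := by
        ext j
        simp only [mem_filter, mem_univ, true_and, mem_union, mem_sdiff, hS, hD]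
        cases hi : i j <;> cases hk : kstar j <;> cases hkk : k j <;> simp
      have hdisj : Disjoint (S \ D) (D \ S) := by
        apply Finset.disjoint_left.2
        intro a ha hb
        simp only [mem_sdiff] at ha hb
        exact ha.2 hb.1
      have e1 := Finset.card_sdiff_add_card_inter S D
      have e2 := Finset.card_sdiff_add_card_inter D S
      have e3 : (D ∩ S).card = (S ∩ D).card := by rw [Finset.inter_comm]
      rw [HD, heq, Finset.card_union_of_disjoint hdisj]
      omega
    constructor <;> rintro ⟨a, b⟩ <;> omega
  have step : (Finset.univ.filter (fun i : Fin l → Bool => HD i kstar = h ∧ HD i k = h)).card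
      = ((univ : Finset (Finset (Fin l))).filter
          (fun S => S.card = h ∧ (S ∩ D).card = x / 2)).card := by
    apply Finset.card_bij' (fun i _ => univ.filter (fun j => i j ≠ kstar j))
      (fun S _ => fun j => xor (decide (j ∈ S)) (kstar j))
    · intro i hi
      simp only [mem_filter, mem_univ, true_and] at hi ⊢
      exact (key i).1 hi
    · intro S hS
      simp only [mem_filter, mem_univ, true_and] at hS ⊢
      have hfe : (univ.filter (fun j => xor (decide (j ∈ S)) (kstar j) ≠ kstar j)) = S := by
        ext j
        simp only [mem_filter, mem_univ, true_and]
        cases hj : decide (j ∈ S) <;> cases hk : kstar j <;>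
          simp_all [decide_eq_true_eq, decide_eq_false_iff_not]
      refine (key _).2 ?_
      rw [hfe]
      exact hS
    · intro i hi
      funext j
      cases hij : i j <;> cases hk : kstar j <;> simp_all
    · intro S hS
      ext j
      simp only [mem_filter, mem_univ, true_and]
      cases hj : decide (j ∈ S) <;> cases hk : kstar j <;>
        simp_all [decide_eq_true_eq, decide_eq_false_iff_not]
  rw [step]
  by_cases hcase : x / 2 ≤ h
  · have hcs := count_sets D h (x / 2) (by omega)
    rw [hDcard] at hcs
    rw [if_pos hcase]
    exact hcs
  · rw [if_neg hcase]
    rw [Finset.card_eq_zero]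
    apply Finset.filter_eq_empty_iff.2
    intro S _
    rintro ⟨h1, h2⟩
    have : (S ∩ D).card ≤ S.card := Finset.card_le_card inter_subset_left
    omega
end

section
/- Fix l, h with h ≤ l, and l-bit words k*, k with k ≠ k* and HD(k*,k) = x. Then the number of l-bit words i for which exactly one of HD(i,k*) = h and HD(i,k) = h holds equals 2·C(l,h) if x is odd, and equals 2·(C(l,h) − C(x,x/2)·C(l−x,h−x/2)) if x is even, where binomial coefficients C(a,b) are 0 when b < 0 or b > a. (In the SFLL-HD model this is the number of input patterns on which key k produces an incorrect output.) -/
/-!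
Flipping the bits of `k*` turns a word `i` into the set `D = {j | i j ≠ k* j}`, so that
`HD(i,k*) = |D|` and `HD(i,k) = |D ∆ S|` with `S = {j | k j ≠ k* j}`, `|S| = x`. Each of the
events `HD(i,k*) = h`, `HD(i,k) = h` has `C(l,h)` solutions, so exactly one of them holds for
`2·C(l,h) − 2N` words, `N` counting the sets with `|D| = h = |D ∆ S|`. As
`|D ∆ S| + 2|D ∩ S| = |D| + |S|`, these are the `h`-sets with `2|D ∩ S| = x`: none for odd `x`,
and for even `x` one picks `x/2` elements of `S` and `h − x/2` outside `S`.
-/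

open Finset
open scoped symmDiff

theorem Finset.card_symmDiff_add_two_mul_card_inter {α : Type*} [DecidableEq α]
    (s t : Finset α) : #(s ∆ t) + 2 * #(s ∩ t) = #s + #t := by
  rw [symmDiff_eq_sup_sdiff_inf, sup_eq_union, inf_eq_inter,
    card_sdiff_of_subset inter_subset_union, ← card_union_add_card_inter s t]
  have := card_le_card (inter_subset_union (s := s) (t := t))
  omega

theorem Finset.filter_xor {α : Type*} [DecidableEq α] (s : Finset α) (p q : α → Prop)
    [DecidablePred p] [DecidablePred q] :
    s.filter (fun a => Xor (p a) (q a)) = s.filter p ∆ s.filter q := by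
  ext a
  rw [mem_filter, mem_symmDiff, mem_filter, mem_filter]
  unfold Xor
  tauto

section SubsetCounting

variable {α : Type*} [Fintype α] [DecidableEq α]

theorem card_filter_card_eq_and_card_inter_eq (S : Finset α) {h m : ℕ} (hm : m ≤ h) :
    #{D : Finset α | #D = h ∧ #(D ∩ S) = m} =
      (#S).choose m * (Fintype.card α - #S).choose (h - m) := by
  have split {A B : Finset α} (hA : A ⊆ S) (hB : Disjoint B S) :
      (A ∪ B) ∩ S = A ∧ (A ∪ B) \ S = B := by
    rw [union_inter_distrib_right, inter_eq_left.2 hA, disjoint_iff_inter_eq_empty.1 hB,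
      union_empty, union_sdiff_distrib, sdiff_eq_empty_iff_subset.2 hA, hB.sdiff_eq_left,
      empty_union]
    exact ⟨rfl, rfl⟩
  rw [← card_compl, ← card_powersetCard, ← card_powersetCard, ← card_product]
  refine card_nbij' (fun D => (D ∩ S, D \ S)) (fun p => p.1 ∪ p.2) ?_ ?_ ?_ ?_
  · intro D hD
    simp only [coe_filter, mem_univ, true_and, Set.mem_ofPred_eq] at hD
    simp only [coe_product, Set.mem_prod, mem_coe, mem_powersetCard,
      subset_compl_iff_disjoint_right]
    have := card_inter_add_card_sdiff D S
    exact ⟨⟨inter_subset_right, hD.2⟩, sdiff_disjoint, by omega⟩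
  · rintro ⟨A, B⟩ hAB
    simp only [coe_product, Set.mem_prod, mem_coe, mem_powersetCard,
      subset_compl_iff_disjoint_right] at hAB
    obtain ⟨⟨hAS, rfl⟩, hBS, hB⟩ := hAB
    simp only [coe_filter, mem_univ, true_and, Set.mem_ofPred_eq, (split hAS hBS).1, and_true]
    rw [card_union_of_disjoint (disjoint_of_subset_left hAS hBS.symm)]
    omega
  · intro D _
    exact sup_inf_sdiff D S
  · rintro ⟨A, B⟩ hAB
    simp only [coe_product, Set.mem_prod, mem_coe, mem_powersetCard,
      subset_compl_iff_disjoint_right] at hAB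
    exact Prod.ext_iff.2 (split hAB.1.1 hAB.2.1)

theorem card_filter_card_eq_and_two_mul_card_inter_eq (S : Finset α) (h : ℕ) :
    #{D : Finset α | #D = h ∧ 2 * #(D ∩ S) = #S} =
      if Odd #S then 0
      else if #S / 2 ≤ h then (#S).choose (#S / 2) * (Fintype.card α - #S).choose (h - #S / 2)
      else 0 := by
  split_ifs with hodd hle
  · refine card_eq_zero.2 <| filter_eq_empty_iff.2 fun D _ hD => ?_
    obtain ⟨r, hr⟩ := hodd
    omega
  · rw [← card_filter_card_eq_and_card_inter_eq S hle]
    congr 1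
    refine filter_congr fun D _ => and_congr_right fun _ => ?_
    obtain ⟨r, hr⟩ := Nat.not_odd_iff_even.1 hodd
    omega
  · refine card_eq_zero.2 <| filter_eq_empty_iff.2 fun D _ hD => ?_
    have := card_le_card (inter_subset_left (s₁ := D) (s₂ := S))
    omega

end SubsetCounting

section Words

variable {l : ℕ}

theorem HD_comm (a b : Fin l → Bool) : HD a b = HD b a := hammingDist_comm a b

def diffSetEquiv (c : Fin l → Bool) : (Fin l → Bool) ≃ Finset (Fin l) where
  toFun i := {j | i j ≠ c j}
  invFun D j := if j ∈ D then !c j else c j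
  left_inv i := by
    funext j
    cases hi : i j <;> cases hc : c j <;> simp [hi, hc]
  right_inv D := by
    ext j
    by_cases hj : j ∈ D <;> simp [hj]

theorem card_diffSetEquiv (c i : Fin l → Bool) : #(diffSetEquiv c i) = HD i c := rfl

theorem diffSetEquiv_symmDiff (c i k : Fin l → Bool) :
    diffSetEquiv c i ∆ diffSetEquiv c k = diffSetEquiv k i := by
  ext j
  simp only [diffSetEquiv, Equiv.coe_fn_mk, mem_symmDiff, mem_filter, mem_univ, true_and]
  cases i j <;> cases k j <;> cases c j <;> decide

theorem card_filter_HD_eq (c : Fin l → Bool) (h : ℕ) : #{i | HD i c = h} = l.choose h := by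
  rw [card_equiv (diffSetEquiv c) (t := powersetCard h univ), card_powersetCard, card_univ,
    Fintype.card_fin]
  simp [card_diffSetEquiv]

theorem card_filter_HD_eq_and_HD_eq (c k : Fin l → Bool) (h : ℕ) :
    #{i | HD i c = h ∧ HD i k = h} =
      #{D : Finset (Fin l) | #D = h ∧ 2 * #(D ∩ diffSetEquiv c k) = #(diffSetEquiv c k)} := by
  refine card_equiv (diffSetEquiv c) fun i => ?_
  have key := card_symmDiff_add_two_mul_card_inter (diffSetEquiv c i) (diffSetEquiv c k)
  rw [diffSetEquiv_symmDiff, card_diffSetEquiv, card_diffSetEquiv, card_diffSetEquiv] at key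
  rw [mem_filter, mem_filter]
  simp only [mem_univ, true_and, card_diffSetEquiv]
  omega

end Words

theorem sfll_hd_per_key_error_count_general {l : ℕ} (h : ℕ)
    (k kstar : Fin l → Bool) (x : ℕ) (hx : HD kstar k = x) :
    (Finset.univ.filter (fun i : Fin l → Bool =>
        Xor (HD i kstar = h) (HD i k = h))).card
      = if Odd x then 2 * l.choose h
        else 2 * (l.choose h -
          (if x / 2 ≤ h then x.choose (x / 2) * (l - x).choose (h - x / 2) else 0)) := by
  have hS : #(diffSetEquiv kstar k) = x := by rw [card_diffSetEquiv, HD_comm, hx]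
  have hboth := card_filter_HD_eq_and_HD_eq kstar k h
  rw [card_filter_card_eq_and_two_mul_card_inter_eq, hS, Fintype.card_fin] at hboth
  have hle : #{i | HD i kstar = h ∧ HD i k = h} ≤ l.choose h :=
    card_filter_HD_eq kstar h ▸ card_le_card (monotone_filter_right _ fun _ _ => And.left)
  have hcount := card_symmDiff_add_two_mul_card_inter
    {i | HD i kstar = h} {i : Fin l → Bool | HD i k = h}
  rw [← filter_xor, ← filter_and, card_filter_HD_eq, card_filter_HD_eq] at hcount
  split_ifs at hboth ⊢ <;> omega

/-- SFLL-HD per-key error count: for `k ≠ k*` with `HD(k*,k) = x`, the number of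
words `i` on which exactly one of `HD(i,k*) = h`, `HD(i,k) = h` holds is
`2·C(l,h)` if `x` is odd and `2·(C(l,h) − C(x,x/2)·C(l−x,h−x/2))` if `x` is even
(binomial coefficients being `0` for negative lower index, via the `if` guard). -/
theorem sfll_hd_per_key_error_count {l : ℕ} (h : ℕ) (hh : h ≤ l)
    (k kstar : Fin l → Bool) (hne : k ≠ kstar) (x : ℕ) (hx : HD kstar k = x) :
    (Finset.univ.filter (fun i : Fin l → Bool =>
        Xor (HD i kstar = h) (HD i k = h))).card
      = if Odd x then 2 * l.choose h
        else 2 * (l.choose h -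
          (if x / 2 ≤ h then x.choose (x / 2) * (l - x).choose (h - x / 2) else 0)) :=
  sfll_hd_per_key_error_count_general h k kstar x hx
end
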